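/- arXiv:1211.2205 — 7 statements merged into one kernel-verified Lean document; each statement's English description precedes it below -/
import Mathlib

section
/- Lemma 3.3 (conservation of the L² norm): Let M_x and M_y be symmetric N×N real matrices, and let u : ℝ → (ℝ × ℝ) → (Fin N → ℝ) be a continuously differentiable function such that there is a compact set K ⊂ ℝ × ℝ with u(t, x) = 0 for all t and all x ∉ K, and such that u satisfies the first-order system ∂_t u + M_x · (∂_x u) + M_y · (∂_y u) = 0 pointwise. Then the function t ↦ ∫_{ℝ×ℝ} ‖u(t, (x,y))‖² d(x,y) is constant in t. -/
/-!
Pairing the system with `u` and using the symmetry of `M_x`, `M_y` (so that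
`∂ₓ (u ⬝ M_x u) = 2 u ⬝ M_x ∂ₓ u`) gives the local conservation law
`∂ₜ |u|² + ∂ₓ (u ⬝ M_x u) + ∂_y (u ⬝ M_y u) = 0`.
The two flux terms integrate to zero over the plane: by Fubini, each is the integral along lines
of the derivative of a compactly supported function. Hence `∫ ∂ₜ |u|² = 0` at every time, and
a second application of Fubini, in `(t, p)`, turns this into `∫ |u t₂|² - ∫ |u t₁|² = 0`.
-/

open Matrix MeasureTheory Set Function

section DotProduct

variable {n : Type*} [Fintype n] {w v : ℝ → n → ℝ} {w' v' : n → ℝ} {x : ℝ}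

theorem HasDerivAt.dotProduct (hw : HasDerivAt w w' x) (hv : HasDerivAt v v' x) :
    HasDerivAt (fun a => w a ⬝ᵥ v a) (w' ⬝ᵥ v x + w x ⬝ᵥ v') x :=
  (HasDerivAt.fun_sum fun i _ => (hasDerivAt_pi.1 hw i).fun_mul (hasDerivAt_pi.1 hv i)).congr_deriv
    Finset.sum_add_distrib

theorem HasDerivAt.matrix_mulVec (M : Matrix n n ℝ) (hw : HasDerivAt w w' x) :
    HasDerivAt (fun a => M *ᵥ w a) (M *ᵥ w') x :=
  hasDerivAt_pi.2 fun i =>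
    ((hasDerivAt_const x (M i)).dotProduct hw).congr_deriv (by simp; rfl)

theorem Matrix.IsSymm.dotProduct_mulVec_comm {M : Matrix n n ℝ} (hM : M.IsSymm) (a b : n → ℝ) :
    a ⬝ᵥ M *ᵥ b = b ⬝ᵥ M *ᵥ a := by
  rw [dotProduct_mulVec, dotProduct_comm, ← mulVec_transpose, hM.eq]

theorem HasDerivAt.dotProduct_mulVec_self {M : Matrix n n ℝ} (hM : M.IsSymm)
    (hw : HasDerivAt w w' x) :
    HasDerivAt (fun a => w a ⬝ᵥ M *ᵥ w a) (2 * (w x ⬝ᵥ M *ᵥ w')) x :=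
  (hw.dotProduct (hw.matrix_mulVec M)).congr_deriv <| by rw [hM.dotProduct_mulVec_comm]; ring

theorem HasCompactSupport.dotProduct_right {X : Type*} [TopologicalSpace X] {f g : X → n → ℝ}
    (hf : HasCompactSupport f) : HasCompactSupport fun p => f p ⬝ᵥ g p :=
  hf.mono fun p hp h => hp (by simp [h])

end DotProduct

theorem integral_eq_zero_of_hasDerivAt_fst {Y : Type*} [TopologicalSpace Y] [MeasurableSpace Y]
    [OpensMeasurableSpace Y] {ν : Measure Y} [SFinite ν] [IsFiniteMeasureOnCompacts ν]
    {f f' : ℝ × Y → ℝ} (hf : HasCompactSupport f) (hf' : Continuous f')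
    (hf'c : HasCompactSupport f') (hd : ∀ x y, HasDerivAt (fun a => f (a, y)) (f' (x, y)) x) :
    ∫ p, f' p ∂(volume.prod ν) = 0 := by
  have hslice {h : ℝ × Y → ℝ} (hh : HasCompactSupport h) (y : Y) :
      HasCompactSupport fun a => h (a, y) :=
    HasCompactSupport.intro (hh.image continuous_fst) fun a ha =>
      image_eq_zero_of_notMem_tsupport fun h' => ha ⟨_, h', rfl⟩
  rw [integral_prod_symm _ (hf'.integrable_of_hasCompactSupport hf'c)]
  suffices ∀ y, ∫ a, f' (a, y) = 0 by simp [this]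
  intro y
  have hfy : Continuous fun a => f (a, y) :=
    continuous_iff_continuousAt.2 fun a => (hd a y).continuousAt
  exact integral_eq_zero_of_hasDerivAt_of_integrable (fun a => hd a y)
    ((hf'.comp (continuous_id.prodMk continuous_const)).integrable_of_hasCompactSupport
      (hslice hf'c y))
    (hfy.integrable_of_hasCompactSupport (hslice hf y))

theorem integral_eq_zero_of_hasDerivAt_snd {X : Type*} [TopologicalSpace X] [MeasurableSpace X]
    [OpensMeasurableSpace X] {μ : Measure X} [SFinite μ] [IsFiniteMeasureOnCompacts μ]
    {f f' : X × ℝ → ℝ} (hf : HasCompactSupport f) (hf' : Continuous f')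
    (hf'c : HasCompactSupport f') (hd : ∀ x y, HasDerivAt (fun b => f (x, b)) (f' (x, y)) y) :
    ∫ p, f' p ∂(μ.prod volume) = 0 := by
  rw [← integral_prod_swap]
  exact integral_eq_zero_of_hasDerivAt_fst (hf.comp_homeomorph (Homeomorph.prodComm ℝ X))
    (hf'.comp continuous_swap) (hf'c.comp_homeomorph (Homeomorph.prodComm ℝ X))
    fun y x => hd x y

theorem integral_eq_of_integral_deriv_eq_zero {P : Type*} [TopologicalSpace P] [T2Space P]
    [MeasurableSpace P] [OpensMeasurableSpace P] {μ : Measure P} [SFinite μ]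
    [IsFiniteMeasureOnCompacts μ] {e g : ℝ → P → ℝ} {K : Set P} (hK : IsCompact K)
    (he : ∀ t p, HasDerivAt (fun s => e s p) (g t p) t) (hg : Continuous (uncurry g))
    (hgK : ∀ t, ∀ p ∉ K, g t p = 0) (he_int : ∀ t, Integrable (e t) μ)
    (hg0 : ∀ t, ∫ p, g t p ∂μ = 0) (t₁ t₂ : ℝ) :
    ∫ p, e t₁ p ∂μ = ∫ p, e t₂ p ∂μ := by
  wlog h : t₁ ≤ t₂ generalizing t₁ t₂
  · exact (this t₂ t₁ (le_of_not_ge h)).symm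
  have hftc : ∀ p, e t₂ p - e t₁ p = ∫ s in Ioc t₁ t₂, g s p := fun p => by
    rw [← intervalIntegral.integral_of_le h]
    exact (intervalIntegral.integral_eq_sub_of_hasDerivAt (fun s _ => he s p)
      ((hg.comp (continuous_id.prodMk continuous_const)).intervalIntegrable _ _)).symm
  have hint : Integrable (uncurry fun p s => g s p) (μ.prod (volume.restrict (Ioc t₁ t₂))) := by
    rw [← Measure.restrict_univ (μ := μ), Measure.prod_restrict]
    refine IntegrableOn.of_forall_sdiff_eq_zero
      ((hg.comp continuous_swap).continuousOn.integrableOn_compact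
        (hK.prod (isCompact_Icc (a := t₁) (b := t₂))))
      (MeasurableSet.univ.prod measurableSet_Ioc) ?_
    rintro ⟨p, s⟩ ⟨⟨-, hs⟩, hps⟩
    exact hgK s p fun hp => hps ⟨hp, Ioc_subset_Icc_self hs⟩
  rw [eq_comm, ← sub_eq_zero, ← integral_sub (he_int t₂) (he_int t₁)]
  simp_rw [hftc]
  rw [integral_integral_swap hint]
  simp [hg0]

theorem integral_dotProduct_mulVec_add_mulVec_eq_zero {n : Type*} [Fintype n]
    {Mx My : Matrix n n ℝ} (hMx : Mx.IsSymm) (hMy : My.IsSymm) {w wx wy : ℝ × ℝ → n → ℝ}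
    (hw : Continuous w) (hwc : HasCompactSupport w) (hwx : Continuous wx) (hwy : Continuous wy)
    (hdx : ∀ x y, HasDerivAt (fun a => w (a, y)) (wx (x, y)) x)
    (hdy : ∀ x y, HasDerivAt (fun b => w (x, b)) (wy (x, y)) y) :
    ∫ p, w p ⬝ᵥ (Mx *ᵥ wx p + My *ᵥ wy p) = 0 := by
  have hfx : Continuous fun p => w p ⬝ᵥ Mx *ᵥ wx p :=
    hw.dotProduct (continuous_const.matrix_mulVec hwx)
  have hfy : Continuous fun p => w p ⬝ᵥ My *ᵥ wy p :=
    hw.dotProduct (continuous_const.matrix_mulVec hwy)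
  have hx : ∫ p, w p ⬝ᵥ Mx *ᵥ wx p = 0 := by
    have := integral_eq_zero_of_hasDerivAt_fst (ν := volume)
      (f' := fun p => 2 * (w p ⬝ᵥ Mx *ᵥ wx p)) (hwc.dotProduct_right (g := fun p => Mx *ᵥ w p))
      (continuous_const.mul hfx) hwc.dotProduct_right.mul_left
      fun x y => (hdx x y).dotProduct_mulVec_self hMx
    rwa [integral_const_mul, mul_eq_zero, or_iff_right two_ne_zero] at this
  have hy : ∫ p, w p ⬝ᵥ My *ᵥ wy p = 0 := by
    have := integral_eq_zero_of_hasDerivAt_snd (μ := volume)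
      (f' := fun p => 2 * (w p ⬝ᵥ My *ᵥ wy p)) (hwc.dotProduct_right (g := fun p => My *ᵥ w p))
      (continuous_const.mul hfy) hwc.dotProduct_right.mul_left
      fun x y => (hdy x y).dotProduct_mulVec_self hMy
    rwa [integral_const_mul, mul_eq_zero, or_iff_right two_ne_zero] at this
  simp_rw [dotProduct_add]
  rw [integral_add (hfx.integrable_of_hasCompactSupport hwc.dotProduct_right)
    (hfy.integrable_of_hasCompactSupport hwc.dotProduct_right), hx, hy, add_zero]

/-- Lemma 3.3: For symmetric `M_x`, `M_y`, a `C¹` solution of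
`∂ₜ u + M_x ∂ₓ u + M_y ∂_y u = 0` that vanishes outside a compact spatial set
conserves the global (Euclidean) `L²` norm in time. -/
theorem PN_L2_norm_conservation (N : ℕ)
    (Mx My : Matrix (Fin N) (Fin N) ℝ)
    (hMx : Mxᵀ = Mx) (hMy : Myᵀ = My)
    (u : ℝ → ℝ × ℝ → (Fin N → ℝ))
    (hreg : ContDiff ℝ 1 (fun p : ℝ × (ℝ × ℝ) => u p.1 p.2))
    (K : Set (ℝ × ℝ)) (hK : IsCompact K)
    (hsupp : ∀ t : ℝ, ∀ x : ℝ × ℝ, x ∉ K → u t x = 0)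
    (hPDE : ∀ t x y : ℝ,
      deriv (fun s => u s (x, y)) t
        + Mx.mulVec (deriv (fun a => u t (a, y)) x)
        + My.mulVec (deriv (fun b => u t (x, b)) y) = 0) :
    ∀ t₁ t₂ : ℝ,
      (∫ p : ℝ × ℝ, ∑ i : Fin N, (u t₁ p i) ^ 2)
        = ∫ p : ℝ × ℝ, ∑ i : Fin N, (u t₂ p i) ^ 2 := by
  set F : ℝ × (ℝ × ℝ) → (Fin N → ℝ) := fun q => u q.1 q.2
  have hF : Differentiable ℝ F := hreg.differentiable one_ne_zero
  have hDF (v) : Continuous fun q => fderiv ℝ F q v :=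
    (hreg.continuous_fderiv one_ne_zero).clm_apply continuous_const
  have hu (t) : Continuous (u t) := hreg.continuous.comp (continuous_const.prodMk continuous_id)
  have hcs (t) : HasCompactSupport (u t) := HasCompactSupport.intro hK (hsupp t)
  -- Reading the partial derivatives off `fderiv ℝ F` makes them jointly continuous.
  have ht (t p) : HasDerivAt (fun s => u s p) (fderiv ℝ F (t, p) (1, 0)) t :=
    (hF _).hasFDerivAt.comp_hasDerivAt t ((hasDerivAt_id t).prodMk (hasDerivAt_const t p))
  have hx (t x y) : HasDerivAt (fun a => u t (a, y)) (fderiv ℝ F (t, (x, y)) (0, 1, 0)) x :=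
    (hF _).hasFDerivAt.comp_hasDerivAt x ((hasDerivAt_const x t).prodMk
      ((hasDerivAt_id x).prodMk (hasDerivAt_const x y)))
  have hy (t x y) : HasDerivAt (fun b => u t (x, b)) (fderiv ℝ F (t, (x, y)) (0, 0, 1)) y :=
    (hF _).hasFDerivAt.comp_hasDerivAt y ((hasDerivAt_const y t).prodMk
      ((hasDerivAt_const y x).prodMk (hasDerivAt_id y)))
  have hut (t) (p : ℝ × ℝ) : fderiv ℝ F (t, p) (1, 0) =
      -(Mx *ᵥ fderiv ℝ F (t, p) (0, 1, 0) + My *ᵥ fderiv ℝ F (t, p) (0, 0, 1)) := by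
    rw [← (ht t p).deriv, ← (hx t p.1 p.2).deriv, ← (hy t p.1 p.2).deriv,
      eq_neg_iff_add_eq_zero, ← add_assoc]
    exact hPDE t p.1 p.2
  have henergy (t) : ∫ p, 2 * (u t p ⬝ᵥ fderiv ℝ F (t, p) (1, 0)) = 0 := by
    simp_rw [hut, dotProduct_neg, mul_neg, integral_neg, integral_const_mul, neg_eq_zero,
      mul_eq_zero]
    exact .inr <| integral_dotProduct_mulVec_add_mulVec_eq_zero hMx hMy (hu t) (hcs t)
      ((hDF _).comp (continuous_const.prodMk continuous_id))
      ((hDF _).comp (continuous_const.prodMk continuous_id)) (hx t) (hy t)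
  have hsq (v : Fin N → ℝ) : ∑ i, v i ^ 2 = v ⬝ᵥ v := by simp [dotProduct, sq]
  simp only [hsq]
  exact integral_eq_of_integral_deriv_eq_zero hK
    (g := fun t p => 2 * (u t p ⬝ᵥ fderiv ℝ F (t, p) (1, 0)))
    (fun t p => ((ht t p).dotProduct (ht t p)).congr_deriv (by rw [dotProduct_comm]; ring))
    (continuous_const.fun_mul (hreg.continuous.dotProduct (hDF _)))
    (fun t p hp => by simp [hsupp t p hp])
    (fun t => ((hu t).dotProduct (hu t)).integrable_of_hasCompactSupport (hcs t).dotProduct_right)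
    henergy
end

section
/- Let E : ℝ → ℝ be defined by E(c) = (exp(c) − 1)/c for c ≠ 0 and E(0) = 1. For every real c, |E(c) − (1 + c/2 + c²/6)| ≤ (|c|³/24)·exp(|c|). (This justifies the Taylor-series branch of the robust implementation of E in the function expm1div.) -/
lemma factorial_add_four_ge (n : ℕ) : (24 : ℝ) * n.factorial ≤ (n + 4).factorial := by
  have h : n.factorial * Nat.factorial 4 ∣ (n + 4).factorial :=
    Nat.factorial_mul_factorial_dvd_factorial_add n 4
  have := Nat.le_of_dvd (Nat.factorial_pos _) h
  have : ((n.factorial * Nat.factorial 4 : ℕ) : ℝ) ≤ ((n + 4).factorial : ℕ) := by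
    exact_mod_cast this
  simpa [Nat.factorial, mul_comm] using this

lemma exp_remainder (x : ℝ) :
    |Real.exp x - (1 + x + x ^ 2 / 2 + x ^ 3 / 6)| ≤ |x| ^ 4 / 24 * Real.exp |x| := by
  have hexp : ∀ y : ℝ, Real.exp y = ∑' n : ℕ, y ^ n / n.factorial := by
    intro y
    rw [Real.exp_eq_exp_ℝ, NormedSpace.exp_eq_tsum_div]
  have hs : ∀ y : ℝ, Summable (fun n : ℕ => y ^ n / n.factorial) :=
    Real.summable_pow_div_factorial
  have hshift := Summable.sum_add_tsum_nat_add (f := fun n : ℕ => x ^ n / n.factorial) 4 (hs x)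
  have h1 : Real.exp x - (1 + x + x ^ 2 / 2 + x ^ 3 / 6)
      = ∑' n : ℕ, x ^ (n + 4) / (n + 4).factorial := by
    rw [hexp x, ← hshift]
    simp [Finset.sum_range_succ, Nat.factorial]
  rw [h1]
  have hsum2 : Summable (fun n : ℕ => x ^ (n + 4) / ((n + 4).factorial : ℝ)) :=
    (hs x).comp_injective (add_left_injective 4)
  have hbound : ∀ n : ℕ, |x| ^ (n + 4) / ((n + 4).factorial : ℝ)
      ≤ |x| ^ 4 / 24 * (|x| ^ n / n.factorial) := by
    intro n
    rw [div_le_iff₀ (by positivity)]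
    have hfac := factorial_add_four_ge n
    have hx4 : |x| ^ (n + 4) = |x| ^ 4 * |x| ^ n := by ring
    rw [hx4]
    calc |x| ^ 4 * |x| ^ n = (|x| ^ 4 / 24 * (|x| ^ n / n.factorial)) * (24 * n.factorial) := by
          field_simp
      _ ≤ (|x| ^ 4 / 24 * (|x| ^ n / n.factorial)) * (n + 4).factorial := by
          apply mul_le_mul_of_nonneg_left hfac (by positivity)
  have hsum3 : Summable (fun n : ℕ => |x| ^ 4 / 24 * (|x| ^ n / n.factorial)) :=
    (hs |x|).mul_left _
  calc |∑' n : ℕ, x ^ (n + 4) / ((n + 4).factorial : ℝ)|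
      ≤ ∑' n : ℕ, |x| ^ (n + 4) / ((n + 4).factorial : ℝ) := by
        simpa using norm_tsum_le_tsum_norm (f := fun n : ℕ => x ^ (n + 4) / ((n + 4).factorial : ℝ))
          (by simpa only [Real.norm_eq_abs] using hsum2.abs)
    _ ≤ ∑' n : ℕ, |x| ^ 4 / 24 * (|x| ^ n / n.factorial) :=
        Summable.tsum_le_tsum hbound ((hs |x|).comp_injective (add_left_injective 4)) hsum3
    _ = |x| ^ 4 / 24 * ∑' n : ℕ, |x| ^ n / n.factorial := tsum_mul_left
    _ = |x| ^ 4 / 24 * Real.exp |x| := by rw [hexp |x|]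

noncomputable def E : ℝ → ℝ := fun c => if c = 0 then 1 else (Real.exp c - 1) / c

/-- Taylor remainder bound for `E`, justifying the series branch of `expm1div`. -/
theorem E_taylor_bound (c : ℝ) :
    |E c - (1 + c / 2 + c ^ 2 / 6)| ≤ |c| ^ 3 / 24 * Real.exp |c| := by
  rcases eq_or_ne c 0 with rfl | hc
  · simp [E]
  · have h := exp_remainder c
    have hc' : |c| ≠ 0 := abs_ne_zero.mpr hc
    have key : E c - (1 + c / 2 + c ^ 2 / 6)
        = (Real.exp c - (1 + c + c ^ 2 / 2 + c ^ 3 / 6)) / c := by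
      simp only [E, if_neg hc]
      field_simp
      ring
    rw [key, abs_div]
    rw [div_le_iff₀ (abs_pos.mpr hc)]
    calc |Real.exp c - (1 + c + c ^ 2 / 2 + c ^ 3 / 6)| ≤ |c| ^ 4 / 24 * Real.exp |c| := h
      _ = |c| ^ 3 / 24 * Real.exp |c| * |c| := by ring
end

section
/- Key inequality of the stability proof: Let E : ℝ → ℝ be defined by E(c) = (exp(c) − 1)/c for c ≠ 0 and E(0) = 1. For all reals s ≥ 0 and t ≥ 0: 4 − 2·s·E(−s) − 2·t·E(−t) + (s·t − 4)·E(−s)·E(−t) ≥ 0. -/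
lemma f_nonneg (x : ℝ) (hx : 0 ≤ x) : 0 ≤ (x - 2) * Real.exp x + x + 2 := by
  have hmono : MonotoneOn (fun y : ℝ => (y - 2) * Real.exp y + y + 2) (Set.Ici 0) := by
    apply monotoneOn_of_deriv_nonneg (convex_Ici 0)
    · fun_prop
    · intro y hy
      apply DifferentiableAt.differentiableWithinAt
      fun_prop
    · intro y hy
      have hD : HasDerivAt (fun y : ℝ => (y - 2) * Real.exp y + y + 2)
          ((1 * Real.exp y + (y - 2) * Real.exp y) + 1 + 0) y := by
        exact ((((hasDerivAt_id y).sub_const 2).mul (Real.hasDerivAt_exp y)).add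
          (hasDerivAt_id y)).add (hasDerivAt_const y 2)
      rw [hD.deriv]
      have h1 : -y + 1 ≤ Real.exp (-y) := Real.add_one_le_exp (-y)
      have h2 : Real.exp (-y) * Real.exp y = 1 := by
        rw [← Real.exp_add]; simp
      have h3 := Real.exp_pos y
      nlinarith [mul_le_mul_of_nonneg_right h1 h3.le]
  have h0 : (fun y : ℝ => (y - 2) * Real.exp y + y + 2) 0 = 0 := by simp
  have := hmono (Set.self_mem_Ici) (Set.mem_Ici.mpr hx) hx
  simpa [h0] using this

lemma aux (x : ℝ) (hx : 0 ≤ x) : 2 * (1 - Real.exp (-x)) ≤ x * (1 + Real.exp (-x)) := by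
  have h := f_nonneg x hx
  have h2 : Real.exp (-x) * Real.exp x = 1 := by rw [← Real.exp_add]; simp
  have h3 := Real.exp_pos x
  nlinarith [mul_le_mul_of_nonneg_right h (Real.exp_pos (-x)).le]

lemma E_neg_nonneg (x : ℝ) (hx : 0 ≤ x) : 0 ≤ E (-x) := by
  rcases eq_or_lt_of_le hx with h | h
  · simp [E, ← h]
  · have hne : (-x : ℝ) ≠ 0 := by linarith
    simp only [E, if_neg hne]
    have hrw : (Real.exp (-x) - 1) / (-x) = (1 - Real.exp (-x)) / x := by
      field_simp; ring
    rw [hrw]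
    apply div_nonneg _ hx
    have : Real.exp (-x) ≤ 1 := Real.exp_le_one_iff.mpr (by linarith)
    linarith

lemma E_mul (x : ℝ) : x * E (-x) = 1 - Real.exp (-x) := by
  rcases eq_or_ne x 0 with h | h
  · simp [h, E]
  · have hne : (-x : ℝ) ≠ 0 := neg_ne_zero.mpr h
    simp only [E, if_neg hne]
    field_simp
    ring

lemma E_le (x : ℝ) (hx : 0 ≤ x) : 2 * E (-x) ≤ 1 + Real.exp (-x) := by
  rcases eq_or_lt_of_le hx with h | h
  · simp [E, ← h]; norm_num
  · have hne : (-x : ℝ) ≠ 0 := by linarith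
    simp only [E, if_neg hne]
    have hrw : (Real.exp (-x) - 1) / (-x) = (1 - Real.exp (-x)) / x := by
      field_simp; ring
    rw [hrw, mul_div_assoc', div_le_iff₀ h]
    have := aux x hx
    nlinarith

/-- Key inequality of the stability proof: for `s, t ≥ 0`,
`4 - 2 s E(-s) - 2 t E(-t) + (s t - 4) E(-s) E(-t) ≥ 0`. -/
theorem stability_key_inequality (s t : ℝ) (hs : 0 ≤ s) (ht : 0 ≤ t) :
    4 - 2 * s * E (-s) - 2 * t * E (-t) + (s * t - 4) * E (-s) * E (-t) ≥ 0 := by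
  have hA := E_mul s
  have hB := E_mul t
  have h1 := E_le s hs
  have h2 := E_le t ht
  have hE1 := E_neg_nonneg s hs
  have hE2 := E_neg_nonneg t ht
  have hu : 0 < 1 + Real.exp (-s) := by positivity
  have hAB : (s * E (-s)) * (t * E (-t)) = (1 - Real.exp (-s)) * (1 - Real.exp (-t)) := by
    rw [hA, hB]
  have hprod : (2 * E (-s)) * (2 * E (-t)) ≤ (1 + Real.exp (-s)) * (1 + Real.exp (-t)) :=
    mul_le_mul h1 h2 (by positivity) hu.le
  nlinarith [hprod, hAB, hA, hB]
end

section
/- Fix reals h > 0, Δt with 0 < Δt ≤ h, k, and c^e ≥ 0, c^o ≥ 0. Let E : ℝ → ℝ be E(c) = (exp(c) − 1)/c for c ≠ 0 and E(0) = 1, and set f^e = −i·(Δt/h)·E(−c^e·Δt/2)·sin(k·h/2) and f^o = −i·(Δt/h)·E(−c^o·Δt/2)·sin(k·h/2) in ℂ. Then the product f^e·f^o is a real number satisfying −1 ≤ f^e·f^o ≤ 0, equal to −(Δt/h)²·E(−c^e·Δt/2)·E(−c^o·Δt/2)·sin²(k·h/2); and if Δt < h then −1 < f^e·f^o ≤ 0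 strictly. -/
lemma E_neg_mem (c : ℝ) (hc : 0 ≤ c) : 0 ≤ E (-c) ∧ E (-c) ≤ 1 := by
  unfold E
  rcases eq_or_lt_of_le hc with hc0 | hc0
  · simp [← hc0]
  · have hne : -c ≠ 0 := by linarith
    simp only [hne, if_false]
    have h1 : Real.exp (-c) ≤ 1 := by
      rw [Real.exp_le_one_iff]; linarith
    have h2 : 1 - c ≤ Real.exp (-c) := by
      have := Real.add_one_le_exp (-c); linarith
    constructor
    · apply div_nonneg_of_nonpos (by linarith) (by linarith)
    · rw [div_le_one_of_neg (by linarith)]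
      linarith

/-- The product `fᵉ fᵒ` of the off-diagonal half-step symbols is the real number
`-(Δt/h)² E(-cᵉΔt/2) E(-cᵒΔt/2) sin²(kh/2)`, lying in `[-1, 0]`, and in `(-1, 0]`
if `Δt < h`. -/
theorem offdiag_product_real_bounds (h Δt k cE cO : ℝ)
    (hh : 0 < h) (hΔt : 0 < Δt) (hΔth : Δt ≤ h) (hcE : 0 ≤ cE) (hcO : 0 ≤ cO)
    (fE fO : ℂ)
    (hfE : fE = -Complex.I * (Δt / h) * E (-(cE * Δt / 2)) * Real.sin (k * h / 2))
    (hfO : fO = -Complex.I * (Δt / h) * E (-(cO * Δt / 2)) * Real.sin (k * h / 2)) :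
    fE * fO = ((-((Δt / h) ^ 2 * E (-(cE * Δt / 2)) * E (-(cO * Δt / 2))
        * Real.sin (k * h / 2) ^ 2) : ℝ) : ℂ) ∧
    (-1 : ℝ) ≤ -((Δt / h) ^ 2 * E (-(cE * Δt / 2)) * E (-(cO * Δt / 2))
        * Real.sin (k * h / 2) ^ 2) ∧
    -((Δt / h) ^ 2 * E (-(cE * Δt / 2)) * E (-(cO * Δt / 2))
        * Real.sin (k * h / 2) ^ 2) ≤ 0 ∧
    (Δt < h → (-1 : ℝ) < -((Δt / h) ^ 2 * E (-(cE * Δt / 2)) * E (-(cO * Δt / 2))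
        * Real.sin (k * h / 2) ^ 2)) := by
  obtain ⟨hE0, hE1⟩ := E_neg_mem (cE * Δt / 2) (by positivity)
  obtain ⟨hO0, hO1⟩ := E_neg_mem (cO * Δt / 2) (by positivity)
  have hr : 0 < Δt / h := by positivity
  have hr1 : Δt / h ≤ 1 := (div_le_one hh).mpr hΔth
  have hs2 : Real.sin (k * h / 2) ^ 2 ≤ 1 := by
    have := Real.neg_one_le_sin (k * h / 2)
    have := Real.sin_le_one (k * h / 2)
    nlinarith
  have hs0 : 0 ≤ Real.sin (k * h / 2) ^ 2 := sq_nonneg _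
  refine ⟨?_, ?_, ?_, ?_⟩
  · rw [hfE, hfO]
    have hI : Complex.I * Complex.I = -1 := Complex.I_mul_I
    push_cast
    ring_nf
    rw [Complex.I_sq]
    ring
  · have hab : E (-(cE * Δt / 2)) * E (-(cO * Δt / 2)) * Real.sin (k * h / 2) ^ 2 ≤ 1 :=
      mul_le_one₀ (mul_le_one₀ hE1 hO0 hO1) hs0 hs2
    have hab0 : 0 ≤ E (-(cE * Δt / 2)) * E (-(cO * Δt / 2)) * Real.sin (k * h / 2) ^ 2 := by
      positivity
    nlinarith [sq_nonneg (Δt / h)]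
  · have : 0 ≤ (Δt / h) ^ 2 * E (-(cE * Δt / 2)) * E (-(cO * Δt / 2))
        * Real.sin (k * h / 2) ^ 2 := by positivity
    linarith
  · intro hlt
    have hr1' : Δt / h < 1 := (div_lt_one hh).mpr hlt
    have hab : E (-(cE * Δt / 2)) * E (-(cO * Δt / 2)) * Real.sin (k * h / 2) ^ 2 ≤ 1 :=
      mul_le_one₀ (mul_le_one₀ hE1 hO0 hO1) hs0 hs2
    have hab0 : 0 ≤ E (-(cE * Δt / 2)) * E (-(cO * Δt / 2)) * Real.sin (k * h / 2) ^ 2 := by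
      positivity
    nlinarith [sq_nonneg (Δt / h)]
end

section
/- Case 'g > d^e·d^o ≥ 0' of the stability proof: Let a, b be real numbers with 0 < a ≤ 1, 0 < b ≤ 1, and let g be real with a·b < g ≤ ½·(a² + b²). Then g + √(g² − (a·b)²) ≤ max(a², b²) ≤ 1 and g − √(g² − (a·b)²) ≥ 0; hence both real roots of z² − 2gz + (ab)² = 0 lie in the interval [0, 1]. -/
/-- Case `g > dᵉdᵒ ≥ 0` of the stability proof: with `0 < a ≤ 1`, `0 < b ≤ 1`
and `a·b < g ≤ ½(a² + b²)`, both real roots of `z² - 2gz + (ab)² = 0` lie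
in `[0, 1]`. -/
theorem stability_case_real_roots (a b g : ℝ)
    (ha : 0 < a) (ha1 : a ≤ 1) (hb : 0 < b) (hb1 : b ≤ 1)
    (hg1 : a * b < g) (hg2 : g ≤ (a ^ 2 + b ^ 2) / 2) :
    g + Real.sqrt (g ^ 2 - (a * b) ^ 2) ≤ max (a ^ 2) (b ^ 2) ∧
    max (a ^ 2) (b ^ 2) ≤ 1 ∧
    0 ≤ g - Real.sqrt (g ^ 2 - (a * b) ^ 2) ∧
    ∀ z : ℝ, z ^ 2 - 2 * g * z + (a * b) ^ 2 = 0 → z ∈ Set.Icc (0 : ℝ) 1 := by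
  have hab : 0 < a * b := mul_pos ha hb
  set s := Real.sqrt (g ^ 2 - (a * b) ^ 2) with hs
  set M := max (a ^ 2) (b ^ 2) with hM
  set m := min (a ^ 2) (b ^ 2) with hm
  have hMm : M * m = (a * b) ^ 2 := by
    rcases le_total (a ^ 2) (b ^ 2) with h | h
    · simp [hM, hm, max_eq_right h, min_eq_left h]; ring
    · simp [hM, hm, max_eq_left h, min_eq_right h]; ring
  have hMmsum : M + m = a ^ 2 + b ^ 2 := max_add_min _ _
  have hm0 : 0 < m := lt_min (by positivity) (by positivity)
  have hgM : g ≤ M := by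
    have : m ≤ M := min_le_max
    linarith [hg2, hMmsum]
  have hnn : 0 ≤ g ^ 2 - (a * b) ^ 2 := by nlinarith
  have hs2 : s ^ 2 = g ^ 2 - (a * b) ^ 2 := Real.sq_sqrt hnn
  have hs0 : 0 ≤ s := Real.sqrt_nonneg _
  have key1 : g + s ≤ M := by
    have hle : g ^ 2 - (a * b) ^ 2 ≤ (M - g) ^ 2 := by nlinarith [hMm, hMmsum]
    have := Real.sqrt_le_sqrt hle
    rw [Real.sqrt_sq (by linarith : 0 ≤ M - g)] at this
    linarith
  have key2 : M ≤ 1 := max_le (by nlinarith) (by nlinarith)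
  have key3 : 0 ≤ g - s := by
    have hle : g ^ 2 - (a * b) ^ 2 ≤ g ^ 2 := by nlinarith
    have := Real.sqrt_le_sqrt hle
    rw [Real.sqrt_sq (by linarith : (0:ℝ) ≤ g)] at this
    linarith
  refine ⟨key1, key2, key3, fun z hz => ?_⟩
  have hfact : (z - g - s) * (z - g + s) = 0 := by nlinarith [hs2]
  rcases mul_eq_zero.mp hfact with h | h
  · have : z = g + s := by linarith
    exact ⟨by linarith, by linarith⟩
  · have : z = g - s := by linarith
    exact ⟨by linarith, by linarith⟩
end

section
/- Consolidated root bound of the stability proof: Let a, b ∈ ℝ with 0 < a ≤ 1 and 0 < b ≤ 1, and let g ∈ ℝ satisfy g ≤ ½·(a² + b²) and 1 + (a·b)² + 2g ≥ 0. Then every complex root z of the quadratic z² − 2gz + (ab)² = 0 satisfies |z| ≤ 1. -/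
/-!
The roots are either real or a pair of complex conjugates. A conjugate pair has modulus
squared equal to the determinant `(ab)² ≤ 1`. A real root cannot lie outside `[-1, 1]`:
the quadratic is nonnegative at `±1` and its constant term is at most `1`, which forces it
to be positive beyond `±1`. Its value `1 - 2g + (ab)²` at `1` is at least
`(1 - a²)(1 - b²) ≥ 0` because `g ≤ ½(a² + b²)`.
-/

namespace Quadratic

variable {g c : ℝ}

theorem abs_le_one_of_root (hc : c ≤ 1) (h_one : 0 ≤ 1 - 2 * g + c) (h_neg_one : 0 ≤ 1 + 2 * g + c)
    {x : ℝ} (hx : x ^ 2 - 2 * g * x + c = 0) : |x| ≤ 1 := by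
  refine abs_le.2 ⟨?_, ?_⟩ <;> by_contra! hout
  · -- for `x < -1`: `x² - 2gx + c ≥ (x + 1)(x + c) > 0`
    nlinarith [mul_nonneg h_neg_one (by linarith : (0 : ℝ) ≤ -x),
      mul_pos (by linarith : (0 : ℝ) < -x - 1) (by linarith : (0 : ℝ) < -x - c)]
  · -- for `x > 1`: `x² - 2gx + c ≥ (x - 1)(x - c) > 0`
    nlinarith [mul_nonneg h_one (by linarith : (0 : ℝ) ≤ x),
      mul_pos (by linarith : (0 : ℝ) < x - 1) (by linarith : (0 : ℝ) < x - c)]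

theorem normSq_eq_of_root_of_im_ne_zero {z : ℂ} (hz : z ^ 2 - 2 * g * z + c = 0)
    (him : z.im ≠ 0) : Complex.normSq z = c := by
  have hre := congrArg Complex.re hz
  have hi := congrArg Complex.im hz
  simp only [pow_two, Complex.sub_re, Complex.add_re, Complex.mul_re, Complex.sub_im,
    Complex.add_im, Complex.mul_im, Complex.ofReal_re, Complex.ofReal_im, Complex.re_ofNat,
    Complex.im_ofNat, Complex.zero_re, Complex.zero_im] at hre hi
  have hzg : z.re = g := by
    have : 2 * z.im * (z.re - g) = 0 := by linarith
    simpa [him, sub_eq_zero] using this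
  rw [Complex.normSq_apply]
  subst hzg
  nlinarith

theorem norm_le_one_of_root (hc : c ≤ 1) (h_one : 0 ≤ 1 - 2 * g + c) (h_neg_one : 0 ≤ 1 + 2 * g + c)
    {z : ℂ} (hz : z ^ 2 - 2 * g * z + c = 0) : ‖z‖ ≤ 1 := by
  by_cases him : z.im = 0
  · have hzx : z = (z.re : ℂ) := Complex.ext rfl (by simpa using him)
    rw [hzx] at hz ⊢
    rw [Complex.norm_real, Real.norm_eq_abs]
    exact abs_le_one_of_root hc h_one h_neg_one (by exact_mod_cast hz)
  · rw [← sq_le_one_iff₀ (norm_nonneg z), Complex.sq_norm,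
      normSq_eq_of_root_of_im_ne_zero hz him]
    exact hc

end Quadratic

/-- Consolidated root bound of the stability proof: with `0 < a ≤ 1`,
`0 < b ≤ 1`, `g ≤ ½(a² + b²)` and `1 + (ab)² + 2g ≥ 0`, every complex root of
`z² - 2gz + (ab)² = 0` has modulus at most `1`. -/
theorem stability_root_bound (a b g : ℝ)
    (ha : 0 < a) (ha1 : a ≤ 1) (hb : 0 < b) (hb1 : b ≤ 1)
    (hg1 : g ≤ (a ^ 2 + b ^ 2) / 2) (hg2 : 1 + (a * b) ^ 2 + 2 * g ≥ 0) :
    ∀ z : ℂ, z ^ 2 - 2 * (g : ℂ) * z + ((a : ℂ) * b) ^ 2 = 0 →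
      ‖z‖ ≤ 1 := by
  intro z hz
  have ha2 : a ^ 2 ≤ 1 := pow_le_one₀ ha.le ha1
  have hb2 : b ^ 2 ≤ 1 := pow_le_one₀ hb.le hb1
  have hdet : (a * b) ^ 2 ≤ 1 := by
    rw [mul_pow]
    exact mul_le_one₀ ha2 (sq_nonneg b) hb2
  have h_one : 0 ≤ 1 - 2 * g + (a * b) ^ 2 := by
    nlinarith [mul_nonneg (sub_nonneg.2 ha2) (sub_nonneg.2 hb2)]
  refine Quadratic.norm_le_one_of_root hdet h_one (by linarith) ?_
  push_cast
  exact hz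
end

section
/- Theorem 4.1 (eigenvalue bound): Fix reals h > 0, Δt with 0 < Δt < h, k, and c^e ≥ 0, c^o ≥ 0. Let E : ℝ → ℝ be E(c) = (exp(c) − 1)/c for c ≠ 0 and E(0) = 1; set d^e = exp(−c^e·Δt/2), d^o = exp(−c^o·Δt/2), f^e = −i·(Δt/h)·E(−c^e·Δt/2)·sin(k·h/2), f^o = −i·(Δt/h)·E(−c^o·Δt/2)·sin(k·h/2), and let G be the 2×2 complex matrix [[(d^e)² + (d^e+1)·f^e·f^o, d^o·(d^e+1)·f^e],[(d^o + (d^e)²)·f^o + (d^e+1)·f^e·(f^o)², (d^o)² + d^o·(d^e+1)·f^e·f^o]]. Then every eigenvalue λ of G satisfies |λ| ≤ 1. -/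
open Matrix Polynomial

/-!
The determinant of `G` is `(dᵉdᵒ)²` and, since `fᵉfᵒ = -q` with `q ≥ 0`, its trace is the real
number `T = (dᵉ)² + (dᵒ)² - (1 + dᵉ)(1 + dᵒ)q`. A root of `X² - T X + D` with real coefficients
is either real or has modulus `√D`, so it lies in the unit disk as soon as `D ≤ 1` and
`|T| ≤ 1 + D`. Here `T ≤ 1 + D` because `(1 - (dᵉ)²)(1 - (dᵒ)²) ≥ 0`, and `-(1 + D) ≤ T` reduces,
through `(Δt/h)² sin² ≤ 1`, to `(1 + e^c) E(c) ≤ 1 + e^{2c}`, which is `|tanh c| ≤ |c|`.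
-/

namespace Real

lemma sinh_le_mul_cosh {x : ℝ} (hx : 0 ≤ x) : sinh x ≤ x * cosh x := by
  have hmono : Monotone fun y : ℝ => y * cosh y - sinh y := by
    refine monotone_of_deriv_nonneg (by fun_prop) fun y => ?_
    have hderiv : HasDerivAt (fun y : ℝ => y * cosh y - sinh y) (y * sinh y) y :=
      (((hasDerivAt_id' y).mul (hasDerivAt_cosh y)).sub (hasDerivAt_sinh y)).congr_deriv
        (by ring)
    rw [hderiv.deriv]
    rcases le_total 0 y with hy | hy
    · exact mul_nonneg hy (sinh_nonneg_iff.mpr hy)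
    · exact mul_nonneg_of_nonpos_of_nonpos hy (sinh_nonpos_iff.mpr hy)
  simpa using hmono hx

lemma sinh_div_self_le_cosh (x : ℝ) : sinh x / x ≤ cosh x := by
  wlog hx : 0 < x generalizing x
  · rcases (not_lt.mp hx).eq_or_lt with rfl | hx
    · simp
    · simpa using this (-x) (neg_pos.mpr hx)
  rw [div_le_iff₀ hx, mul_comm]
  exact sinh_le_mul_cosh hx.le

end Real

lemma E_pos (c : ℝ) : 0 < E c := by
  unfold E
  split_ifs with hc
  · exact one_pos
  rcases lt_or_gt_of_ne hc with hc | hc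
  · exact div_pos_of_neg_of_neg (by linarith [Real.exp_lt_one_iff.mpr hc]) hc
  · exact div_pos (by linarith [Real.one_lt_exp_iff.mpr hc]) hc

lemma one_add_exp_mul_E_le (c : ℝ) : (1 + Real.exp c) * E c ≤ 1 + Real.exp c ^ 2 := by
  unfold E
  split_ifs with hc
  · norm_num [hc]
  have hsinh : (1 + Real.exp c) * ((Real.exp c - 1) / c)
      = 2 * Real.exp c * (Real.sinh c / c) := by
    rw [Real.sinh_eq, Real.exp_neg]
    field_simp
    ring
  have hcosh : 1 + Real.exp c ^ 2 = 2 * Real.exp c * Real.cosh c := by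
    rw [Real.cosh_eq, Real.exp_neg]
    field_simp
    ring
  rw [hsinh, hcosh]
  exact mul_le_mul_of_nonneg_left (Real.sinh_div_self_le_cosh c) (by positivity)

lemma norm_le_one_of_quadratic_root {T D : ℝ} (hD : D ≤ 1) (hT : |T| ≤ 1 + D) {z : ℂ}
    (hz : z ^ 2 - T * z + D = 0) : ‖z‖ ≤ 1 := by
  by_cases him : z.im = 0
  · obtain ⟨x, rfl⟩ : ∃ x : ℝ, (x : ℂ) = z := ⟨z.re, Complex.ext rfl him.symm⟩
    have hx : x ^ 2 - T * x + D = 0 := by exact_mod_cast hz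
    rw [Complex.norm_real, Real.norm_eq_abs, abs_le]
    obtain ⟨hT₁, hT₂⟩ := abs_le.mp hT
    constructor
    · nlinarith [sq_nonneg (x + 1), sq_nonneg (x + D)]
    · nlinarith [sq_nonneg (x - 1), sq_nonneg (x - D)]
  · -- `z` and `conj z` are the two roots, so `‖z‖² = z * conj z = D`
    set w := (starRingEnd ℂ) z
    have hw : w ^ 2 - T * w + D = 0 := by
      simpa [w, Complex.conj_ofReal] using congrArg (starRingEnd ℂ) hz
    have hzw : z - w ≠ 0 :=
      sub_ne_zero.mpr fun h => him (Complex.conj_eq_iff_im.mp h.symm)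
    have hsum : z + w = T := by
      have : (z - w) * (z + w - T) = 0 := by linear_combination hz - hw
      linear_combination (mul_eq_zero.mp this).resolve_left hzw
    have hnormSq : Complex.normSq z = D := by
      have : (Complex.normSq z : ℂ) = D := by
        rw [← Complex.mul_conj]
        linear_combination z * hsum - hz
      exact_mod_cast this
    rw [Complex.norm_def, Real.sqrt_le_one, hnormSq]
    exact hD

lemma abs_sq_add_sq_sub_le {a b q : ℝ} (ha₀ : 0 ≤ a) (ha₁ : a ≤ 1) (hb₀ : 0 ≤ b) (hb₁ : b ≤ 1)
    (hq₀ : 0 ≤ q) (hq : (a + 1) * (b + 1) * q ≤ (1 + a ^ 2) * (1 + b ^ 2)) :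
    |a ^ 2 + b ^ 2 - (a + 1) * (b + 1) * q| ≤ 1 + (a * b) ^ 2 := by
  have hcoupling : 0 ≤ (a + 1) * (b + 1) * q := by positivity
  have hdamping : 0 ≤ (1 - a ^ 2) * (1 - b ^ 2) :=
    mul_nonneg (by nlinarith) (by nlinarith)
  rw [abs_le]
  constructor <;> nlinarith

section GrowthFactor

variable {R : Type*} [CommRing R] (a b f g : R)

def growthFactor : Matrix (Fin 2) (Fin 2) R :=
  !![a ^ 2 + (a + 1) * f * g, b * (a + 1) * f;
     (b + a ^ 2) * g + (a + 1) * f * g ^ 2, b ^ 2 + b * (a + 1) * f * g]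

lemma trace_growthFactor :
    (growthFactor a b f g).trace = a ^ 2 + b ^ 2 + (a + 1) * (b + 1) * (f * g) := by
  simp [growthFactor, trace_fin_two]
  ring

lemma det_growthFactor : (growthFactor a b f g).det = (a * b) ^ 2 := by
  simp [growthFactor, det_fin_two]
  ring

end GrowthFactor

lemma norm_le_one_of_isRoot_charpoly_growthFactor {a b q : ℝ} (ha₀ : 0 ≤ a) (ha₁ : a ≤ 1)
    (hb₀ : 0 ≤ b) (hb₁ : b ≤ 1) (hq₀ : 0 ≤ q)
    (hq : (a + 1) * (b + 1) * q ≤ (1 + a ^ 2) * (1 + b ^ 2)) {f g : ℂ} (hfg : f * g = -q)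
    {z : ℂ} (hz : (growthFactor (a : ℂ) b f g).charpoly.IsRoot z) : ‖z‖ ≤ 1 := by
  rw [charpoly_fin_two, trace_growthFactor, det_growthFactor, hfg, IsRoot.def] at hz
  simp only [eval_add, eval_sub, eval_mul, eval_pow, eval_X, eval_C] at hz
  refine norm_le_one_of_quadratic_root (T := a ^ 2 + b ^ 2 - (a + 1) * (b + 1) * q)
    ?_ (abs_sq_add_sq_sub_le ha₀ ha₁ hb₀ hb₁ hq₀ hq) ?_
  · nlinarith [mul_le_one₀ ha₁ hb₀ hb₁, mul_nonneg ha₀ hb₀]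
  · push_cast
    linear_combination hz

/-- Theorem 4.1 (eigenvalue bound): for `0 < Δt < h` and decay rates
`cᵉ, cᵒ ≥ 0`, every eigenvalue of the full-step growth-factor matrix `G` of the
staggered-grid Strang-splitting scheme has modulus at most `1`. -/
theorem growth_factor_eigenvalue_bound (h Δt k cE cO : ℝ)
    (hh : 0 < h) (hΔt : 0 < Δt) (hΔth : Δt < h) (hcE : 0 ≤ cE) (hcO : 0 ≤ cO)
    (dE dO : ℝ) (fE fO : ℂ)
    (hdE : dE = Real.exp (-(cE * Δt / 2)))
    (hdO : dO = Real.exp (-(cO * Δt / 2)))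
    (hfE : fE = -Complex.I * (Δt / h) * E (-(cE * Δt / 2)) * Real.sin (k * h / 2))
    (hfO : fO = -Complex.I * (Δt / h) * E (-(cO * Δt / 2)) * Real.sin (k * h / 2))
    (G : Matrix (Fin 2) (Fin 2) ℂ)
    (hG : G = !![(dE : ℂ) ^ 2 + ((dE : ℂ) + 1) * fE * fO, (dO : ℂ) * ((dE : ℂ) + 1) * fE;
                 ((dO : ℂ) + (dE : ℂ) ^ 2) * fO + ((dE : ℂ) + 1) * fE * fO ^ 2,
                 (dO : ℂ) ^ 2 + (dO : ℂ) * ((dE : ℂ) + 1) * fE * fO]) :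
    ∀ lam : ℂ, G.charpoly.IsRoot lam → ‖lam‖ ≤ 1 := by
  subst hdE hdO hfE hfO hG
  intro lam hroot
  have hsin := Real.sin_sq_le_one (k * h / 2)
  generalize Real.sin (k * h / 2) = σ at *
  set dE := Real.exp (-(cE * Δt / 2))
  set dO := Real.exp (-(cO * Δt / 2))
  have heE := E_pos (-(cE * Δt / 2))
  have heO := E_pos (-(cO * Δt / 2))
  have hdeE := one_add_exp_mul_E_le (-(cE * Δt / 2))
  have hdeO := one_add_exp_mul_E_le (-(cO * Δt / 2))
  set eE := E (-(cE * Δt / 2))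
  set eO := E (-(cO * Δt / 2))
  have hcfl : (Δt / h * σ) ^ 2 ≤ 1 := by
    rw [mul_pow]
    exact mul_le_one₀ (pow_le_one₀ (by positivity) ((div_le_one hh).mpr hΔth.le))
      (sq_nonneg _) hsin
  have hq : (dE + 1) * (dO + 1) * ((Δt / h * σ) ^ 2 * eE * eO)
      ≤ (1 + dE ^ 2) * (1 + dO ^ 2) := by
    have hbound := mul_le_mul (mul_le_mul hdeE hdeO (by positivity) (by positivity)) hcfl
      (sq_nonneg _) (by positivity)
    linear_combination hbound
  refine norm_le_one_of_isRoot_charpoly_growthFactor (Real.exp_pos _).le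
    (Real.exp_le_one_iff.mpr (by nlinarith)) (Real.exp_pos _).le
    (Real.exp_le_one_iff.mpr (by nlinarith)) (by positivity) hq ?_ hroot
  push_cast
  linear_combination ((Δt : ℂ) / h * σ) ^ 2 * eE * eO * Complex.I_sq
end
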